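/- arXiv:2003.08677 — 2 statements merged into one kernel-verified Lean document; each statement's English description precedes it below -/
import Mathlib

section
/- Let α > 0 and define g₃(t) = ∫₀ᵗ (1/α)(e^{α s²/2} − 1) ds. Then for every t ≥ 0, t · g₃(t) ≤ (4/3) e^{α t²/2} / α². -/
open Real

/-!
Write `E t = exp (α t² / 2)` and `I t = ∫₀ᵗ E`, so that `α g₃ t = I t - t`. The function
`t E / 3 + 2 t - I` vanishes at `0` and is increasing: with `x = α t² / 2` its derivative is
`2 - (2 / 3) eˣ (1 - x) ≥ 4 / 3`, since `1 - x ≤ e⁻ˣ`. So it is nonnegative on `[0, ∞)`, and it is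
`1 / α` times the derivative of `4 E / 3 - α t (I - t)`, which is therefore increasing there and
bounded below by its value `4 / 3` at `0`.
-/

lemma Real.exp_mul_one_sub_le_one (x : ℝ) : exp x * (1 - x) ≤ 1 := by
  calc exp x * (1 - x) ≤ exp x * exp (-x) := by
        gcongr
        linarith [add_one_le_exp (-x)]
    _ = 1 := by rw [← exp_add, add_neg_cancel, exp_zero]

lemma hasDerivAt_exp_mul_sq_div_two (α t : ℝ) :
    HasDerivAt (fun u => exp (α * u ^ 2 / 2)) (α * t * exp (α * t ^ 2 / 2)) t := by
  have h := (((hasDerivAt_pow 2 t).const_mul α).div_const 2).exp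
  convert h using 1
  ring

lemma hasDerivAt_integral_exp_mul_sq_div_two (α t : ℝ) :
    HasDerivAt (fun u => ∫ s in (0 : ℝ)..u, exp (α * s ^ 2 / 2)) (exp (α * t ^ 2 / 2)) t :=
  ((by fun_prop : Continuous fun s : ℝ => exp (α * s ^ 2 / 2)).integral_hasStrictDerivAt
    0 t).hasDerivAt

lemma integral_exp_mul_sq_div_two_le (α : ℝ) {t : ℝ} (ht : 0 ≤ t) :
    ∫ s in (0 : ℝ)..t, exp (α * s ^ 2 / 2) ≤ t / 3 * exp (α * t ^ 2 / 2) + 2 * t := by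
  set H : ℝ → ℝ := fun u => u / 3 * exp (α * u ^ 2 / 2) + 2 * u
    - ∫ s in (0 : ℝ)..u, exp (α * s ^ 2 / 2)
  have hH : ∀ u, HasDerivAt H (2 - 2 / 3 * (exp (α * u ^ 2 / 2) * (1 - α * u ^ 2 / 2))) u := by
    intro u
    have h := ((((hasDerivAt_id' u).div_const 3).fun_mul
      (hasDerivAt_exp_mul_sq_div_two α u)).fun_add ((hasDerivAt_id' u).const_mul 2)).fun_sub
      (hasDerivAt_integral_exp_mul_sq_div_two α u)
    exact h.congr_deriv (by ring)
  have hH_le : H 0 ≤ H t := monotone_of_hasDerivAt_nonneg hH (fun u =>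
    show (0 : ℝ) ≤ _ by linarith [exp_mul_one_sub_le_one (α * u ^ 2 / 2)]) ht
  simp only [H, intervalIntegral.integral_same] at hH_le
  linarith

lemma mul_mul_integral_exp_mul_sq_div_two_sub_le {α : ℝ} (hα : 0 ≤ α) {t : ℝ} (ht : 0 ≤ t) :
    α * t * ((∫ s in (0 : ℝ)..t, exp (α * s ^ 2 / 2)) - t) ≤ 4 / 3 * exp (α * t ^ 2 / 2) := by
  set F : ℝ → ℝ := fun u => 4 / 3 * exp (α * u ^ 2 / 2)
    - α * u * ((∫ s in (0 : ℝ)..u, exp (α * s ^ 2 / 2)) - u)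
  set F' : ℝ → ℝ := fun u => α * (u / 3 * exp (α * u ^ 2 / 2) + 2 * u
    - ∫ s in (0 : ℝ)..u, exp (α * s ^ 2 / 2))
  have hF : ∀ u, HasDerivAt F (F' u) u := by
    intro u
    have h := ((hasDerivAt_exp_mul_sq_div_two α u).const_mul (4 / 3)).fun_sub
      (((hasDerivAt_id' u).const_mul α).fun_mul
        ((hasDerivAt_integral_exp_mul_sq_div_two α u).fun_sub (hasDerivAt_id' u)))
    exact h.congr_deriv (by ring)
  have hF_mono : MonotoneOn F (Set.Ici 0) := by
    refine monotoneOn_of_hasDerivWithinAt_nonneg (convex_Ici 0)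
      (fun u _ => (hF u).continuousAt.continuousWithinAt) (fun u _ => (hF u).hasDerivWithinAt)
      fun u hu => ?_
    rw [interior_Ici] at hu
    exact mul_nonneg hα (sub_nonneg.2 (integral_exp_mul_sq_div_two_le α (le_of_lt hu)))
  have hF_le : F 0 ≤ F t := hF_mono Set.self_mem_Ici ht ht
  simp only [F, intervalIntegral.integral_same] at hF_le
  norm_num at hF_le
  linarith

/-- for α > 0 and g₃(t) = ∫₀ᵗ (1/α)(e^{α s²/2} − 1) ds, for every t ≥ 0,
t g₃(t) ≤ (4/3) e^{α t²/2} / α². -/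
theorem t_mul_g3_bound
    (α : ℝ) (hα : 0 < α)
    (g3 : ℝ → ℝ)
    (hg3 : ∀ t, g3 t = ∫ s in (0:ℝ)..t, (1 / α) * (Real.exp (α * s ^ 2 / 2) - 1)) :
    ∀ t : ℝ, 0 ≤ t →
      t * g3 t ≤ (4 / 3) * Real.exp (α * t ^ 2 / 2) / α ^ 2 := by
  intro t ht
  have hg3_eq : g3 t = ((∫ s in (0 : ℝ)..t, exp (α * s ^ 2 / 2)) - t) / α := by
    have hI : IntervalIntegrable (fun s => exp (α * s ^ 2 / 2)) MeasureTheory.volume 0 t :=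
      (by fun_prop : Continuous fun s : ℝ => exp (α * s ^ 2 / 2)).intervalIntegrable 0 t
    rw [hg3, intervalIntegral.integral_const_mul,
      intervalIntegral.integral_sub hI intervalIntegrable_const]
    simp [div_eq_inv_mul]
  rw [hg3_eq, mul_div_assoc', le_div_iff₀ (by positivity)]
  calc _ = α * t * ((∫ s in (0 : ℝ)..t, exp (α * s ^ 2 / 2)) - t) := by field_simp
    _ ≤ _ := mul_mul_integral_exp_mul_sq_div_two_sub_le hα.le ht
end

section
/- For every real t, the Dawson function satisfies |t · D(t)| < 2/3. -/
open Real

/-- The Dawson function D(t) = e^{−t²} ∫₀ᵗ e^{s²} ds. -/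
noncomputable def dawson (t : ℝ) : ℝ := Real.exp (-t ^ 2) * ∫ s in (0:ℝ)..t, Real.exp (s ^ 2)

/-!
For `t > 0` the claim says `F t < 2/3 · e^{t²} / t`, where `F t = ∫₀ᵗ e^{s²} ds`. The difference
`dawsonGap t` of the two sides has derivative `e^{t²} (t² - 2) / (3 t²)`, so it is smallest at
`t = √2`, and everything reduces to the single numerical fact `F √2 < √2 e² / 3`. On each quarter
of `[0, √2]` we bound `e^{s²}` by the exponential of the chord of `s²`, which integrates in closed
form; the resulting inequality only involves `e` and `e^{1/8} < 8/7`. The case `t < 0` follows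
because `t D(t)` is even.
-/

open intervalIntegral

lemma continuous_exp_sq : Continuous fun s : ℝ => exp (s ^ 2) := by fun_prop

lemma dawson_neg (t : ℝ) : dawson (-t) = -dawson t := by
  have h : ∫ s in (0:ℝ)..-t, exp (s ^ 2) = -∫ s in (0:ℝ)..t, exp (s ^ 2) := by
    have h := integral_comp_neg (a := 0) (b := t) fun s => exp (s ^ 2)
    simp only [neg_sq, neg_zero] at h
    rw [integral_symm (-t) 0, ← h]
  rw [dawson, dawson, h, neg_sq, mul_neg]

lemma dawson_nonneg {t : ℝ} (ht : 0 ≤ t) : 0 ≤ dawson t :=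
  mul_nonneg (exp_pos _).le (integral_nonneg ht fun _ _ => (exp_pos _).le)

lemma integral_exp_sq_le_chord {a b : ℝ} (hab : a ≤ b) (hsum : a + b ≠ 0) :
    ∫ s in a..b, exp (s ^ 2) ≤ (exp (b ^ 2) - exp (a ^ 2)) / (a + b) := by
  have hderiv : ∀ s, HasDerivAt (fun s => exp (a ^ 2 + (s - a) * (a + b)) / (a + b))
      (exp (a ^ 2 + (s - a) * (a + b))) s := by
    intro s
    refine ((((hasDerivAt_id s).sub_const a).mul_const (a + b)).const_add (a ^ 2)).exp.div_const
      (a + b) |>.congr_deriv ?_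
    simp only [id, one_mul]
    field_simp
  calc ∫ s in a..b, exp (s ^ 2) ≤ ∫ s in a..b, exp (a ^ 2 + (s - a) * (a + b)) :=
        integral_mono_on hab (continuous_exp_sq.intervalIntegrable a b)
          ((by fun_prop : Continuous fun s => exp (a ^ 2 + (s - a) * (a + b))).intervalIntegrable a b)
          fun s hs => exp_le_exp.2 (by nlinarith [hs.1, hs.2])
    _ = (exp (b ^ 2) - exp (a ^ 2)) / (a + b) := by
        rw [integral_eq_sub_of_hasDerivAt (fun s _ => hderiv s)
          ((by fun_prop : Continuous fun s => exp (a ^ 2 + (s - a) * (a + b))).intervalIntegrable a b)]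
        ring_nf

lemma integral_exp_sq_le_sum_chords {c : ℝ} (hc : 0 < c) (n : ℕ) :
    ∫ s in (0:ℝ)..n * c, exp (s ^ 2) ≤
      ∑ k ∈ Finset.range n, (exp (((k + 1) * c) ^ 2) - exp ((k * c) ^ 2)) / ((2 * k + 1) * c) := by
  induction n with
  | zero => simp
  | succ n ih =>
    have hchord := integral_exp_sq_le_chord (a := n * c) (b := (n + 1) * c) (by nlinarith)
      (by positivity)
    rw [Finset.sum_range_succ, ← integral_add_adjacent_intervals (b := n * c)
      (continuous_exp_sq.intervalIntegrable _ _) (continuous_exp_sq.intervalIntegrable _ _)]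
    rw [show (n : ℝ) * c + (n + 1) * c = (2 * n + 1) * c by ring] at hchord
    push_cast
    linarith

noncomputable def dawsonGap (u : ℝ) : ℝ := 2 / 3 * exp (u ^ 2) / u - ∫ s in (0:ℝ)..u, exp (s ^ 2)

lemma hasDerivAt_dawsonGap {u : ℝ} (hu : u ≠ 0) :
    HasDerivAt dawsonGap (exp (u ^ 2) * (u ^ 2 - 2) / (3 * u ^ 2)) u := by
  have hexp : HasDerivAt (fun v => exp (v ^ 2)) (exp (u ^ 2) * (2 * u)) u := by
    simpa using (hasDerivAt_pow 2 u).exp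
  refine ((hexp.const_mul (2 / 3)).div (hasDerivAt_id u) hu).sub
    (continuous_exp_sq.integral_hasStrictDerivAt 0 u).hasDerivAt |>.congr_deriv ?_
  simp only [id]
  field_simp
  ring

lemma dawsonGap_antitoneOn : AntitoneOn dawsonGap (Set.Ioc 0 √2) := by
  refine antitoneOn_of_hasDerivWithinAt_nonpos (convex_Ioc 0 √2)
    (fun u hu => (hasDerivAt_dawsonGap hu.1.ne').continuousAt.continuousWithinAt)
    (fun u hu => (hasDerivAt_dawsonGap (interior_subset hu).1.ne').hasDerivWithinAt)
    fun u hu => ?_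
  rw [interior_Ioc] at hu
  have : u ^ 2 < 2 := (lt_sqrt hu.1.le).1 hu.2
  exact div_nonpos_of_nonpos_of_nonneg
    (mul_nonpos_of_nonneg_of_nonpos (exp_pos _).le (by linarith)) (by positivity)

lemma dawsonGap_monotoneOn : MonotoneOn dawsonGap (Set.Ici √2) := by
  have hpos : ∀ u ∈ Set.Ici √2, 0 < u := fun u hu => (sqrt_pos.2 two_pos).trans_le hu
  refine monotoneOn_of_hasDerivWithinAt_nonneg (convex_Ici √2)
    (fun u hu => (hasDerivAt_dawsonGap (hpos u hu).ne').continuousAt.continuousWithinAt)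
    (fun u hu => (hasDerivAt_dawsonGap (hpos u (interior_subset hu)).ne').hasDerivWithinAt)
    fun u hu => ?_
  rw [interior_Ici] at hu
  have : 2 ≤ u ^ 2 := by simpa using pow_le_pow_left₀ (sqrt_nonneg 2) hu.le 2
  exact div_nonneg (mul_nonneg (exp_pos _).le (by linarith)) (by positivity)

lemma dawsonGap_sqrt_two_le {u : ℝ} (hu : 0 < u) : dawsonGap √2 ≤ dawsonGap u := by
  rcases le_total u √2 with h | h
  · exact dawsonGap_antitoneOn ⟨hu, h⟩ ⟨sqrt_pos.2 two_pos, le_rfl⟩ h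
  · exact dawsonGap_monotoneOn Set.self_mem_Ici h h

lemma exp_one_eighth_lt : exp (1 / 8) < 8 / 7 := by
  have := exp_bound_div_one_sub_of_interval' (x := 1 / 8) (by norm_num) (by norm_num)
  norm_num at this ⊢
  exact this

-- The partition points `k √2 / 4` have squares `k² / 8`, so only powers of `e^{1/8}` and `e` occur.
lemma integral_exp_sq_sqrt_two_le :
    ∫ s in (0:ℝ)..√2, exp (s ^ 2) ≤ 4 / √2 * ((exp (1 / 8) - 1) + (exp (1 / 8) ^ 4 - exp (1 / 8)) / 3
      + (exp 1 * exp (1 / 8) - exp (1 / 8) ^ 4) / 5 + (exp 1 ^ 2 - exp 1 * exp (1 / 8)) / 7) := by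
  have hc : 0 < √2 / 4 := by positivity
  have hc2 : (√2 / 4) ^ 2 = 1 / 8 := by rw [div_pow, sq_sqrt zero_le_two]; norm_num
  have hI := integral_exp_sq_le_sum_chords hc 4
  rw [show ((4 : ℕ) : ℝ) * (√2 / 4) = √2 by push_cast; ring] at hI
  simp only [Finset.sum_range_succ, Finset.sum_range_zero, mul_pow, hc2] at hI
  norm_num at hI
  rw [← exp_nat_mul, ← exp_nat_mul, ← exp_add]
  convert hI using 1
  field_simp
  norm_num
  ring_nf

lemma dawsonGap_sqrt_two_pos : 0 < dawsonGap √2 := by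
  set y := exp (1 / 8)
  set e := exp 1
  have hy : y < 8 / 7 := exp_one_eighth_lt
  have hy4 : y ^ 4 < (8 / 7) ^ 4 := pow_lt_pow_left₀ hy (exp_pos _).le (by norm_num)
  have hey : e * y < 2.7182818286 * (8 / 7) :=
    mul_lt_mul'' exp_one_lt_d9 hy (exp_pos _).le (exp_pos _).le
  have he2 : 2.7182818283 ^ 2 < e ^ 2 := pow_lt_pow_left₀ exp_one_gt_d9 (by norm_num) (by norm_num)
  have hchords : (y - 1) + (y ^ 4 - y) / 3 + (e * y - y ^ 4) / 5 + (e ^ 2 - e * y) / 7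
      < e ^ 2 / 6 := by linarith
  have hgap : dawsonGap √2 = 4 / √2 * (e ^ 2 / 6) - ∫ s in (0:ℝ)..√2, exp (s ^ 2) := by
    rw [dawsonGap, sq_sqrt zero_le_two, show (2 : ℝ) = (2 : ℕ) * 1 by norm_num, exp_nat_mul]
    ring
  rw [hgap, sub_pos]
  exact integral_exp_sq_sqrt_two_le.trans_lt
    (mul_lt_mul_of_pos_left hchords (by positivity))

lemma mul_dawson_lt_of_pos {t : ℝ} (ht : 0 < t) : t * dawson t < 2 / 3 := by
  have hgap : 0 < dawsonGap t := dawsonGap_sqrt_two_pos.trans_le (dawsonGap_sqrt_two_le ht)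
  have hI : ∫ s in (0:ℝ)..t, exp (s ^ 2) < 2 / 3 * exp (t ^ 2) / t := sub_pos.1 hgap
  calc t * dawson t = t * exp (-t ^ 2) * ∫ s in (0:ℝ)..t, exp (s ^ 2) := by rw [dawson]; ring
    _ < t * exp (-t ^ 2) * (2 / 3 * exp (t ^ 2) / t) := by gcongr
    _ = 2 / 3 := by
        rw [exp_neg]
        field_simp

lemma abs_mul_dawson (t : ℝ) : |t * dawson t| = |t| * dawson |t| := by
  rcases le_total 0 t with h | h
  · rw [abs_of_nonneg h, abs_of_nonneg (mul_nonneg h (dawson_nonneg h))]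
  · rw [abs_of_nonpos h,
      ← abs_of_nonneg (mul_nonneg (neg_nonneg.2 h) (dawson_nonneg (neg_nonneg.2 h))),
      dawson_neg, neg_mul_neg]

/-- |t D(t)| < 2/3 for every real t. -/
theorem abs_t_mul_dawson_lt : ∀ t : ℝ, |t * dawson t| < 2 / 3 := by
  intro t
  rw [abs_mul_dawson]
  rcases (abs_nonneg t).eq_or_lt with h | h
  · rw [← h]
    norm_num
  · exact mul_dawson_lt_of_pos h
end
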